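/- (Pliss Lemma) Given 0 < c ≤ A, let γ := c/A. Assume real numbers a₁,…,a_N satisfy a_j ≤ A for all 1 ≤ j ≤ N and Σ_{j=1}^N a_j ≥ cN. Then there exist l ≥ γN and integers 1 ≤ n₁ < ⋯ < n_l ≤ N such that Σ_{j=k}^{n_i} a_j ≥ 0 for every k = 1,…,n_i and every i = 1,…,l. -/

import Mathlib

/-- **Pliss Lemma.** Given `0 < c ≤ A` and real numbers `a₁, …, a_N` with `a_j ≤ A` for all
`1 ≤ j ≤ N` and `∑_{j=1}^N a_j ≥ cN`, there exist `l ≥ (c/A)·N` indices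
`1 ≤ n₁ < ⋯ < n_l ≤ N` such that `∑_{j=k}^{n_i} a_j ≥ 0` for every `k = 1, …, n_i` and
every `i = 1, …, l`. -/
theorem pliss_lemma (c A : ℝ) (hc : 0 < c) (hcA : c ≤ A) (N : ℕ) (a : ℕ → ℝ)
    (hbound : ∀ j : ℕ, 1 ≤ j → j ≤ N → a j ≤ A)
    (hsum : c * N ≤ ∑ j ∈ Finset.Icc 1 N, a j) :
    ∃ (l : ℕ) (n : ℕ → ℕ),
      (c / A) * N ≤ (l : ℝ) ∧
      (∀ i₁ i₂, 1 ≤ i₁ → i₁ < i₂ → i₂ ≤ l → n i₁ < n i₂) ∧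
      (∀ i, 1 ≤ i → i ≤ l → 1 ≤ n i ∧ n i ≤ N) ∧
      (∀ i, 1 ≤ i → i ≤ l → ∀ k, 1 ≤ k → k ≤ n i →
        0 ≤ ∑ j ∈ Finset.Icc k (n i), a j) := by
  classical
  have hA : (0:ℝ) < A := hc.trans_le hcA
  set S : ℕ → ℝ := fun n => ∑ j ∈ Finset.Ioc 0 n, a j with hSdef
  set P : ℕ → Prop := fun n => ∀ m, m < n → S m ≤ S n with hPdef
  set f : ℕ → ℕ := fun n => ((Finset.Icc 1 n).filter P).card with hfdef
  have hfmono : Monotone f := fun m n hmn =>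
    Finset.card_le_card (Finset.filter_subset_filter _ (Finset.Icc_subset_Icc_right hmn))
  have key : ∀ n, n ≤ N → S n ≤ (f n : ℝ) * A := by
    intro n
    induction n using Nat.strong_induction_on with
    | _ n ih =>
      intro hnN
      match n with
      | 0 => simp only [hSdef]; positivity
      | (m+1) =>
        have hSm1 : S (m+1) = S m + a (m+1) := by
          simp [hSdef, Finset.sum_Ioc_succ_top (Nat.zero_le m)]
        by_cases hPn : P (m+1)
        · have hins : Finset.Icc 1 (m+1) = insert (m+1) (Finset.Icc 1 m) := by
            ext x; simp only [Finset.mem_Icc, Finset.mem_insert]; omega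
          have hcard : f (m+1) = f m + 1 := by
            simp only [hfdef, hins, Finset.filter_insert, if_pos hPn]
            rw [Finset.card_insert_of_notMem]
            simp [Finset.mem_filter]
          have h1 : S m ≤ (f m : ℝ) * A := ih m (by omega) (by omega)
          have h2 : a (m+1) ≤ A := hbound (m+1) (by omega) hnN
          rw [hSm1, hcard]
          push_cast
          nlinarith
        · simp only [hPdef, not_forall] at hPn
          obtain ⟨m', hm', hlt⟩ := hPn
          push_neg at hlt
          have h1 : S m' ≤ (f m' : ℝ) * A := ih m' hm' (by omega)
          have h2 : (f m' : ℝ) * A ≤ (f (m+1) : ℝ) * A := by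
            have hle : f m' ≤ f (m+1) := hfmono (by omega)
            exact mul_le_mul_of_nonneg_right (by exact_mod_cast hle) hA.le
          linarith
  set R : Finset ℕ := (Finset.Icc 1 N).filter P with hRdef
  set L : List ℕ := R.sort (· ≤ ·) with hLdef
  have hLlen : L.length = R.card := Finset.length_sort _
  refine ⟨R.card, fun i => L.getD (i-1) 0, ?_, ?_, ?_, ?_⟩
  · have hSN : c * N ≤ S N := by
      show c * N ≤ ∑ j ∈ Finset.Ioc 0 N, a j
      rwa [← Finset.Icc_add_one_left_eq_Ioc]
    have : c * N ≤ (R.card : ℝ) * A := le_trans hSN (key N le_rfl)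
    rw [div_mul_eq_mul_div, div_le_iff₀ hA]
    linarith
  · intro i₁ i₂ h1 h12 h2l
    have l1 : i₁ - 1 < L.length := by rw [hLlen]; omega
    have l2 : i₂ - 1 < L.length := by rw [hLlen]; omega
    show L.getD (i₁-1) 0 < L.getD (i₂-1) 0
    rw [List.getD_eq_getElem L 0 l1, List.getD_eq_getElem L 0 l2]
    have hsorted : L.Pairwise (· < ·) := (Finset.sortedLT_sort R).pairwise
    exact List.pairwise_iff_getElem.mp hsorted _ _ l1 l2 (by omega)
  · intro i h1 h2
    have li : i - 1 < L.length := by rw [hLlen]; omega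
    have hmem : L.getD (i-1) 0 ∈ R := by
      rw [List.getD_eq_getElem L 0 li, ← Finset.mem_sort (α := ℕ) (· ≤ ·)]
      exact List.getElem_mem li
    rw [hRdef, Finset.mem_filter, Finset.mem_Icc] at hmem
    exact ⟨hmem.1.1, hmem.1.2⟩
  · intro i h1 h2 k hk1 hk2
    beta_reduce at hk2 ⊢
    have li : i - 1 < L.length := by rw [hLlen]; omega
    have hmem : L.getD (i-1) 0 ∈ R := by
      rw [List.getD_eq_getElem L 0 li, ← Finset.mem_sort (α := ℕ) (· ≤ ·)]
      exact List.getElem_mem li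
    rw [hRdef, Finset.mem_filter] at hmem
    set ni := L.getD (i-1) 0
    have hP : P ni := hmem.2
    have hkk : k - 1 < ni := by omega
    have hle : S (k-1) ≤ S ni := hP _ hkk
    have hsplit : S (k-1) + ∑ j ∈ Finset.Ioc (k-1) ni, a j = S ni := by
      rw [hSdef]
      exact Finset.sum_Ioc_consecutive _ (Nat.zero_le _) (by omega)
    have : Finset.Icc k ni = Finset.Ioc (k-1) ni := by
      rw [← Finset.Icc_add_one_left_eq_Ioc]
      congr 1
      omega
    rw [this]
    linarith
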